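/- arXiv:1501.02634 — 2 statements merged into one kernel-verified Lean document; each statement's English description precedes it below -/
import Mathlib

section
/- The split reformulation of the robust constraint |x₁ − ζ| + |x₂ − ζ| ≤ 2 (for all ζ ∈ [−1,1]) via epigraph variables — there exist y₁, y₂ with y₁ + y₂ ≤ 2, y₁ ≥ x₁ − ζ, y₁ ≥ ζ − x₁, y₂ ≥ x₂ − ζ, y₂ ≥ ζ − x₂ for all ζ ∈ [−1,1] — has unique feasible x, namely x = (0, 0), whereas the original robust constraint is satisfied by every point (θ, −θ) with θ ∈ [−1, 1]. -/
/-- Splitting the uncertainty over several constraints via epigraph variables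
shrinks the robust feasible set to {(0,0)}, whereas every (θ, -θ) with
θ ∈ [-1,1] satisfies the original robust constraint. -/
theorem robust_split_shrinks :
    {p : ℝ × ℝ | ∃ y₁ y₂ : ℝ, y₁ + y₂ ≤ 2 ∧
        ∀ ζ ∈ Set.Icc (-1 : ℝ) 1,
          y₁ ≥ p.1 - ζ ∧ y₁ ≥ ζ - p.1 ∧ y₂ ≥ p.2 - ζ ∧ y₂ ≥ ζ - p.2} =
      {((0 : ℝ), (0 : ℝ))} ∧
    ∀ θ ∈ Set.Icc (-1 : ℝ) 1, ∀ ζ ∈ Set.Icc (-1 : ℝ) 1,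
      |θ - ζ| + |(-θ) - ζ| ≤ 2 := by
  constructor
  · ext ⟨x₁, x₂⟩
    simp only [Set.mem_setOf_eq, Set.mem_singleton_iff, Prod.mk.injEq]
    constructor
    · rintro ⟨y₁, y₂, hsum, h⟩
      have h1 := h 1 (by constructor <;> norm_num)
      have h2 := h (-1) (by constructor <;> norm_num)
      obtain ⟨a1, b1, c1, d1⟩ := h1
      obtain ⟨a2, b2, c2, d2⟩ := h2
      constructor <;> nlinarith [abs_nonneg x₁, abs_nonneg x₂]
    · rintro ⟨rfl, rfl⟩
      refine ⟨1, 1, by norm_num, ?_⟩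
      rintro ζ ⟨hζ1, hζ2⟩
      exact ⟨by linarith, by linarith, by linarith, by linarith⟩
  · rintro θ ⟨hθ1, hθ2⟩ ζ ⟨hζ1, hζ2⟩
    rcases abs_cases (θ - ζ) with ⟨h1, _⟩ | ⟨h1, _⟩ <;>
      rcases abs_cases (-θ - ζ) with ⟨h2, _⟩ | ⟨h2, _⟩ <;> linarith
end

section
/- For the toy problem, the min-max reformulation min over a with ‖a‖₂ ≤ 1 of (sup over y of y₁ + y₂ subject to a₁y₁ ≤ 1, a₂y₂ ≤ 1) has value 2√2, attained at a = (1/√2, 1/√2); in particular it differs from the robust counterpart value 2, so the min-max reformulation is not equivalent to the robust counterpart when uncertainty is not constraint-wise. -/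
lemma sup_pos_case (a1 a2 : ℝ) (h1 : 0 < a1) (h2 : 0 < a2) :
    (⨆ y : {y : ℝ × ℝ // a1 * y.1 ≤ 1 ∧ a2 * y.2 ≤ 1},
      ((y.1.1 + y.1.2 : ℝ) : EReal)) = ((1 / a1 + 1 / a2 : ℝ) : EReal) := by
  apply le_antisymm
  · apply iSup_le
    rintro ⟨⟨y1, y2⟩, hy1, hy2⟩
    have : y1 + y2 ≤ 1 / a1 + 1 / a2 := by
      have h1' : y1 ≤ 1 / a1 := (le_div_iff₀' h1).mpr hy1
      have h2' : y2 ≤ 1 / a2 := (le_div_iff₀' h2).mpr hy2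
      linarith
    exact_mod_cast this
  · have := le_iSup (fun y : {y : ℝ × ℝ // a1 * y.1 ≤ 1 ∧ a2 * y.2 ≤ 1} =>
      ((y.1.1 + y.1.2 : ℝ) : EReal))
      ⟨(1 / a1, 1 / a2), by constructor <;> simp [mul_one_div, mul_inv_cancel₀ h1.ne', mul_inv_cancel₀ h2.ne']⟩
    simpa using this

lemma sqrt2_pos : (0:ℝ) < Real.sqrt 2 := Real.sqrt_pos.mpr (by norm_num)

/-- The min-max reformulation of the toy problem has value 2√2, attained at
a = (1/√2, 1/√2), and thus differs from the robust counterpart value 2. -/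
theorem toy_minmax_value :
    IsLeast {v : EReal | ∃ a : ℝ × ℝ, a.1 ^ 2 + a.2 ^ 2 ≤ 1 ∧
        v = ⨆ y : {y : ℝ × ℝ // a.1 * y.1 ≤ 1 ∧ a.2 * y.2 ≤ 1},
          ((y.1.1 + y.1.2 : ℝ) : EReal)}
      ((2 * Real.sqrt 2 : ℝ) : EReal) ∧
    (⨆ y : {y : ℝ × ℝ //
        (1 / Real.sqrt 2) * y.1 ≤ 1 ∧ (1 / Real.sqrt 2) * y.2 ≤ 1},
      ((y.1.1 + y.1.2 : ℝ) : EReal)) = ((2 * Real.sqrt 2 : ℝ) : EReal) ∧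
    ((2 * Real.sqrt 2 : ℝ) : EReal) ≠ ((2 : ℝ) : EReal) := by
  have hs : Real.sqrt 2 ^ 2 = 2 := Real.sq_sqrt (by norm_num)
  have hsp := sqrt2_pos
  have hval : (⨆ y : {y : ℝ × ℝ //
        (1 / Real.sqrt 2) * y.1 ≤ 1 ∧ (1 / Real.sqrt 2) * y.2 ≤ 1},
      ((y.1.1 + y.1.2 : ℝ) : EReal)) = ((2 * Real.sqrt 2 : ℝ) : EReal) := by
    rw [sup_pos_case _ _ (by positivity) (by positivity)]
    congr 1
    rw [one_div_one_div]
    ring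
  refine ⟨⟨⟨(1 / Real.sqrt 2, 1 / Real.sqrt 2), ?_, hval.symm⟩, ?_⟩, hval, ?_⟩
  · have : (1 / Real.sqrt 2 : ℝ) ^ 2 = 1 / 2 := by
      rw [div_pow, hs]; norm_num
    simp only [this]; norm_num
  · rintro v ⟨⟨a1, a2⟩, ha, rfl⟩
    rcases le_or_gt a1 0 with h1 | h1
    · refine le_trans ?_ (le_iSup _ ⟨(2 * Real.sqrt 2, 0), ?_, by simp⟩)
      · simp
      · simp only at *; nlinarith
    rcases le_or_gt a2 0 with h2 | h2
    · refine le_trans ?_ (le_iSup _ ⟨(0, 2 * Real.sqrt 2), by simp, ?_⟩)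
      · simp
      · simp only at *; nlinarith
    rw [sup_pos_case _ _ h1 h2]
    have key : 2 * Real.sqrt 2 ≤ 1 / a1 + 1 / a2 := by
      simp only at ha
      rw [div_add_div _ _ h1.ne' h2.ne', le_div_iff₀ (by positivity)]
      have hq2 : (a1 + a2) ^ 2 ≥ 8 * (a1 * a2) ^ 2 := by
        nlinarith [sq_nonneg (a1 - a2), mul_pos h1 h2]
      have hq : 0 < a1 + a2 := by linarith
      have hsp2 : 0 < Real.sqrt 2 * (a1 * a2) := by positivity
      nlinarith [hq2, hs, hq, hsp2, mul_pos hq hsp2]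
    exact_mod_cast key
  · rw [ne_eq, EReal.coe_eq_coe_iff]
    intro h
    nlinarith
end
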